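/- The function f(x) = e^{−x²/2} / ∫_x^∞ e^{−t²/2} dt is convex on ℝ. -/

import Mathlib

open Real MeasureTheory

section aux
open Set Filter Topology ENNReal

/-- The standard (unnormalized) Gaussian. -/
noncomputable def gau (t : ℝ) : ℝ := Real.exp (-t ^ 2 / 2)

/-- Upper tail integral of the Gaussian. -/
noncomputable def gInt (x : ℝ) : ℝ := ∫ t in Set.Ici x, gau t

lemma gau_pos (t : ℝ) : 0 < gau t := Real.exp_pos _

lemma gau_cont : Continuous gau := by
  unfold gau; fun_prop

lemma gau_hasDeriv (t : ℝ) : HasDerivAt gau (-t * gau t) t := by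
  have h1 : HasDerivAt (fun t : ℝ => -t ^ 2 / 2) (-t) t := by
    have := ((hasDerivAt_pow 2 t).neg.div_const 2)
    refine this.congr_deriv ?_
    push_cast
    ring
  have := h1.exp
  refine this.congr_deriv ?_
  unfold gau
  ring

lemma integrable_pow_gau (n : ℕ) : Integrable (fun t : ℝ => t ^ n * gau t) := by
  have h := integrable_rpow_mul_exp_neg_mul_sq (by norm_num : (0:ℝ) < 1/2)
    (s := (n : ℝ)) (lt_of_lt_of_le neg_one_lt_zero (Nat.cast_nonneg n))
  refine h.congr (Filter.Eventually.of_forall fun t => ?_)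
  simp only [Real.rpow_natCast]
  unfold gau
  congr 1
  ring

lemma integrable_gau : Integrable gau := by
  have := integrable_pow_gau 0
  simpa using this


lemma integrable_poly_gau (a b c d : ℝ) :
    Integrable (fun t : ℝ => (a * t ^ 3 + b * t ^ 2 + c * t + d) * gau t) := by
  have h := (((integrable_pow_gau 3).const_mul a).add
    ((integrable_pow_gau 2).const_mul b)).add
    (((integrable_pow_gau 1).const_mul c).add ((integrable_pow_gau 0).const_mul d))
  refine h.congr (Filter.Eventually.of_forall fun t => ?_)
  simp only [Pi.add_apply]
  ring

lemma integrable_poly_gau' (a b c d : ℝ) (f : ℝ → ℝ)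
    (hf : ∀ t, (a * t ^ 3 + b * t ^ 2 + c * t + d) * gau t = f t) : Integrable f :=
  (integrable_poly_gau a b c d).congr (Filter.Eventually.of_forall hf)

lemma tendsto_pow_gau (n : ℕ) :
    Tendsto (fun t : ℝ => t ^ n * gau t) atTop (𝓝 0) := by
  have hup : Tendsto (fun t : ℝ => t ^ n * Real.exp (-t)) atTop (𝓝 0) :=
    tendsto_pow_mul_exp_neg_atTop_nhds_zero n
  refine tendsto_of_tendsto_of_tendsto_of_le_of_le' tendsto_const_nhds hup ?_ ?_
  · filter_upwards [eventually_ge_atTop (0:ℝ)] with t ht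
    exact mul_nonneg (pow_nonneg ht n) (gau_pos t).le
  · filter_upwards [eventually_ge_atTop (2:ℝ)] with t ht
    have h0 : (0:ℝ) ≤ t := by linarith
    have : -t ^ 2 / 2 ≤ -t := by nlinarith
    have := Real.exp_le_exp.mpr this
    unfold gau
    nlinarith [pow_nonneg h0 n, Real.exp_pos (-t ^ 2 / 2)]

lemma J1 (x : ℝ) : ∫ t in Set.Ioi x, t * gau t = gau x := by
  have hd : ∀ t ∈ Set.Ici x, HasDerivAt (fun t => -gau t) (t * gau t) t := by
    intro t _
    have := (gau_hasDeriv t).neg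
    refine this.congr_deriv ?_
    ring
  have htend : Tendsto (fun t : ℝ => -gau t) atTop (𝓝 0) := by
    have := (tendsto_pow_gau 0).neg
    simp only [pow_zero, one_mul, neg_zero] at this
    exact this
  have := integral_Ioi_of_hasDerivAt_of_tendsto' hd
    (integrable_poly_gau' 0 0 1 0 _ (fun t => by ring)).integrableOn htend
  simpa using this

lemma J2 (x : ℝ) : ∫ t in Set.Ioi x, (t ^ 2 - 1) * gau t = x * gau x := by
  have hd : ∀ t ∈ Set.Ici x, HasDerivAt (fun t => -(t * gau t)) ((t ^ 2 - 1) * gau t) t := by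
    intro t _
    have := ((hasDerivAt_id t).mul (gau_hasDeriv t)).neg
    refine this.congr_deriv ?_
    simp only [id]
    ring
  have htend : Tendsto (fun t : ℝ => -(t * gau t)) atTop (𝓝 0) := by
    have := (tendsto_pow_gau 1).neg
    simp only [pow_one, neg_zero] at this
    exact this
  have hint : IntegrableOn (fun t : ℝ => (t ^ 2 - 1) * gau t) (Set.Ioi x) :=
    (integrable_poly_gau' 0 1 0 (-1) _ (fun t => by ring)).integrableOn
  have := integral_Ioi_of_hasDerivAt_of_tendsto' hd hint htend
  simpa using this

lemma J3 (x : ℝ) : ∫ t in Set.Ioi x, t ^ 3 * gau t = (x ^ 2 + 2) * gau x := by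
  have hd : ∀ t ∈ Set.Ici x, HasDerivAt (fun t => -((t ^ 2 + 2) * gau t)) (t ^ 3 * gau t) t := by
    intro t _
    have hpoly : HasDerivAt (fun t : ℝ => t ^ 2 + 2) (2 * t) t := by
      have := (hasDerivAt_pow 2 t).add_const 2
      refine this.congr_deriv ?_
      push_cast
      ring
    have := (hpoly.mul (gau_hasDeriv t)).neg
    refine this.congr_deriv ?_
    ring
  have htend : Tendsto (fun t : ℝ => -((t ^ 2 + 2) * gau t)) atTop (𝓝 0) := by
    have h2 := tendsto_pow_gau 2
    have h0 := tendsto_pow_gau 0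
    have := ((h2.add (h0.const_mul 2)).neg)
    simp only [pow_zero, one_mul, add_zero, mul_zero, neg_zero] at this
    refine this.congr fun t => ?_
    ring
  have hint : IntegrableOn (fun t : ℝ => t ^ 3 * gau t) (Set.Ioi x) :=
    (integrable_pow_gau 3).integrableOn
  have := integral_Ioi_of_hasDerivAt_of_tendsto' hd hint htend
  simpa using this

lemma gInt_eq_Ioi (x : ℝ) : gInt x = ∫ t in Set.Ioi x, gau t := by
  rw [gInt, integral_Ici_eq_integral_Ioi]

lemma gInt_pos (x : ℝ) : 0 < gInt x := by
  rw [gInt_eq_Ioi]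
  rw [setIntegral_pos_iff_support_of_nonneg_ae
    (Filter.Eventually.of_forall fun t => (gau_pos t).le) integrable_gau.integrableOn]
  have hsub : Set.Ioi x ⊆ Function.support gau ∩ Set.Ioi x := fun t ht =>
    ⟨(gau_pos t).ne', ht⟩
  calc (0 : ℝ≥0∞) < volume (Set.Ioi x) := by simp [Real.volume_Ioi]
    _ ≤ volume (Function.support gau ∩ Set.Ioi x) := measure_mono hsub

/-- The key inequality giving convexity of the inverse Mills ratio. -/
lemma key_ineq (x : ℝ) :
    0 ≤ (x ^ 2 - 1) * (gInt x) ^ 2 - 3 * x * gau x * gInt x + 2 * (gau x) ^ 2 := by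
  set A := gInt x with hA
  set B := gau x with hB
  set I1 : ℝ := ∫ t in Set.Ioi x, (t - x) * gau t with hI1def
  set I2 : ℝ := ∫ t in Set.Ioi x, (t - x) ^ 2 * gau t with hI2def
  set I3 : ℝ := ∫ t in Set.Ioi x, (t - x) ^ 3 * gau t with hI3def
  have int0 : Integrable gau := integrable_gau
  have intt : Integrable (fun t : ℝ => t * gau t) :=
    integrable_poly_gau' 0 0 1 0 _ (fun t => by ring)
  have intt2 : Integrable (fun t : ℝ => (t ^ 2 - 1) * gau t) :=
    integrable_poly_gau' 0 1 0 (-1) _ (fun t => by ring)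
  have intt3 : Integrable (fun t : ℝ => t ^ 3 * gau t) :=
    integrable_poly_gau' 1 0 0 0 _ (fun t => by ring)
  have int1 : Integrable (fun t : ℝ => (t - x) * gau t) :=
    integrable_poly_gau' 0 0 1 (-x) _ (fun t => by ring)
  have int2 : Integrable (fun t : ℝ => (t - x) ^ 2 * gau t) :=
    integrable_poly_gau' 0 1 (-2 * x) (x ^ 2) _ (fun t => by ring)
  have int3 : Integrable (fun t : ℝ => (t - x) ^ 3 * gau t) :=
    integrable_poly_gau' 1 (-3 * x) (3 * x ^ 2) (-x ^ 3) _ (fun t => by ring)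
  have hIoiA : A = ∫ t in Set.Ioi x, gau t := gInt_eq_Ioi x
  have hI1 : I1 = B - x * A := by
    rw [hI1def]
    have heq : (fun t : ℝ => (t - x) * gau t) = fun t => t * gau t - x * gau t := by
      funext t; ring
    rw [heq, integral_sub intt.integrableOn ((int0.const_mul x).integrableOn),
      integral_const_mul, J1, hIoiA]
  have hI2 : I2 = (x ^ 2 + 1) * A - x * B := by
    rw [hI2def]
    have heq : (fun t : ℝ => (t - x) ^ 2 * gau t)
        = fun t => ((t ^ 2 - 1) * gau t - 2 * x * (t * gau t)) + (x ^ 2 + 1) * gau t := by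
      funext t; ring
    have hab : Integrable (fun t : ℝ => (t ^ 2 - 1) * gau t - 2 * x * (t * gau t)) :=
      intt2.sub (intt.const_mul (2 * x))
    rw [heq, integral_add hab.integrableOn ((int0.const_mul _).integrableOn),
      integral_sub intt2.integrableOn ((intt.const_mul _).integrableOn),
      integral_const_mul, integral_const_mul, J1, J2, hIoiA]
    ring
  have hI3 : I3 = (x ^ 2 + 2) * B - (x ^ 3 + 3 * x) * A := by
    rw [hI3def]
    have heq : (fun t : ℝ => (t - x) ^ 3 * gau t)
        = fun t => (t ^ 3 * gau t - 3 * x * ((t ^ 2 - 1) * gau t))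
          + (3 * x ^ 2 * (t * gau t) - (x ^ 3 + 3 * x) * gau t) := by
      funext t; ring
    have hab : Integrable (fun t : ℝ => t ^ 3 * gau t - 3 * x * ((t ^ 2 - 1) * gau t)) :=
      intt3.sub (intt2.const_mul (3 * x))
    have hcd : Integrable (fun t : ℝ => 3 * x ^ 2 * (t * gau t) - (x ^ 3 + 3 * x) * gau t) :=
      (intt.const_mul (3 * x ^ 2)).sub (int0.const_mul (x ^ 3 + 3 * x))
    rw [heq, integral_add hab.integrableOn hcd.integrableOn,
      integral_sub intt3.integrableOn ((intt2.const_mul _).integrableOn),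
      integral_sub ((intt.const_mul _).integrableOn) ((int0.const_mul _).integrableOn),
      integral_const_mul, integral_const_mul, integral_const_mul, J1, J2, J3, hIoiA]
    ring
  have hI1pos : 0 < I1 := by
    rw [hI1def]
    rw [setIntegral_pos_iff_support_of_nonneg_ae]
    · have hsub : Set.Ioi x ⊆ Function.support (fun t => (t - x) * gau t) ∩ Set.Ioi x := by
        intro t ht
        refine ⟨?_, ht⟩
        have ht' : x < t := ht
        have : 0 < (t - x) * gau t := mul_pos (by linarith) (gau_pos t)
        exact this.ne'
      calc (0 : ENNReal) < volume (Set.Ioi x) := by simp [Real.volume_Ioi]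
        _ ≤ _ := measure_mono hsub
    · rw [Filter.EventuallyLE, ae_restrict_iff' measurableSet_Ioi]
      refine Filter.Eventually.of_forall fun t ht => ?_
      have ht' : x < t := ht
      have := (gau_pos t).le
      simp only [Pi.zero_apply]
      nlinarith
    · exact int1.integrableOn
  have hCS : I2 ^ 2 ≤ I1 * I3 := by
    have h0 : 0 ≤ ∫ t in Set.Ioi x, (t - x) * (I2 - I1 * (t - x)) ^ 2 * gau t := by
      refine setIntegral_nonneg measurableSet_Ioi fun t ht => ?_
      have h1 : 0 ≤ t - x := by
        have ht' : x < t := ht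
        linarith
      have h2 := (gau_pos t).le
      have h3 : (0:ℝ) ≤ (I2 - I1 * (t - x)) ^ 2 := sq_nonneg _
      positivity
    have hexp : (∫ t in Set.Ioi x, (t - x) * (I2 - I1 * (t - x)) ^ 2 * gau t)
        = I2 ^ 2 * I1 - 2 * I1 * I2 * I2 + I1 ^ 2 * I3 := by
      have heq : (fun t : ℝ => (t - x) * (I2 - I1 * (t - x)) ^ 2 * gau t)
          = fun t => (I2 ^ 2 * ((t - x) * gau t)
              - 2 * I1 * I2 * ((t - x) ^ 2 * gau t))
              + I1 ^ 2 * ((t - x) ^ 3 * gau t) := by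
        funext t; ring
      have hab : Integrable (fun t : ℝ =>
          I2 ^ 2 * ((t - x) * gau t) - 2 * I1 * I2 * ((t - x) ^ 2 * gau t)) :=
        (int1.const_mul _).sub (int2.const_mul _)
      rw [heq, integral_add hab.integrableOn ((int3.const_mul _).integrableOn),
        integral_sub ((int1.const_mul _).integrableOn) ((int2.const_mul _).integrableOn),
        integral_const_mul, integral_const_mul, integral_const_mul]
    rw [hexp] at h0
    nlinarith [sq_nonneg I1, hI1pos]
  rw [hI1, hI2, hI3] at hCS
  nlinarith [hCS]

lemma gInt_hasDeriv (x : ℝ) : HasDerivAt gInt (-(gau x)) x := by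
  have split : ∀ a b : ℝ, a ≤ b → gInt a = (∫ t in a..b, gau t) + gInt b := by
    intro a b hab
    rw [gInt_eq_Ioi, gInt_eq_Ioi, intervalIntegral.integral_of_le hab,
      ← Set.Ioc_union_Ioi_eq_Ioi hab,
      setIntegral_union (Set.Ioc_disjoint_Ioi le_rfl) measurableSet_Ioi
        integrable_gau.integrableOn integrable_gau.integrableOn]
  have repr : ∀ y : ℝ, gInt y = gInt 0 - ∫ t in (0:ℝ)..y, gau t := by
    intro y
    rcases le_total 0 y with h | h
    · have := split 0 y h
      linarith
    · have := split y 0 h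
      rw [intervalIntegral.integral_symm]
      linarith
  have hderiv : HasDerivAt (fun y : ℝ => gInt 0 - ∫ t in (0:ℝ)..y, gau t) (-(gau x)) x := by
    have h := intervalIntegral.integral_hasDerivAt_right (a := (0:ℝ)) (b := x)
      (integrable_gau.intervalIntegrable)
      (gau_cont.stronglyMeasurable.stronglyMeasurableAtFilter)
      gau_cont.continuousAt
    exact h.const_sub (gInt 0)
  have hfun : gInt = fun y : ℝ => gInt 0 - ∫ t in (0:ℝ)..y, gau t := funext repr
  rw [hfun]
  exact hderiv

/-- First derivative of the inverse Mills ratio. -/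
noncomputable def millsD (x : ℝ) : ℝ :=
  ((-x * gau x) * gInt x - gau x * (-(gau x))) / gInt x ^ 2

/-- Second derivative of the inverse Mills ratio. -/
noncomputable def millsD2 (x : ℝ) : ℝ :=
  gau x * ((x ^ 2 - 1) * gInt x ^ 2 - 3 * x * gau x * gInt x + 2 * (gau x) ^ 2)
    / gInt x ^ 3

lemma mills_hasDeriv (x : ℝ) :
    HasDerivAt (fun x => gau x / gInt x) (millsD x) x :=
  (gau_hasDeriv x).div (gInt_hasDeriv x) (gInt_pos x).ne'

lemma millsD_hasDeriv (x : ℝ) : HasDerivAt millsD (millsD2 x) x := by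
  have ha : HasDerivAt (fun x : ℝ => -x * gau x) ((-1) * gau x + (-x) * (-x * gau x)) x := by
    have := (hasDerivAt_id x).neg.mul (gau_hasDeriv x)
    exact this
  have hnum : HasDerivAt (fun x : ℝ => (-x * gau x) * gInt x - gau x * (-(gau x)))
      ((((-1 : ℝ) * gau x + (-x) * (-x * gau x)) * gInt x + (-x * gau x) * (-(gau x)))
        - ((-x * gau x) * (-(gau x)) + gau x * (-(-x * gau x)))) x := by
    have h1 := ha.mul (gInt_hasDeriv x)
    have h2 := (gau_hasDeriv x).mul (gau_hasDeriv x).neg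
    exact h1.sub h2
  have hden : HasDerivAt (fun x : ℝ => gInt x ^ 2) (((2:ℕ):ℝ) * gInt x ^ 1 * (-(gau x))) x :=
    (gInt_hasDeriv x).pow 2
  have h := hnum.div hden (pow_ne_zero _ (gInt_pos x).ne')
  have heq : millsD = fun x : ℝ =>
      ((-x * gau x) * gInt x - gau x * (-(gau x))) / gInt x ^ 2 := rfl
  rw [heq]
  refine h.congr_deriv ?_
  unfold millsD2
  have hg := (gInt_pos x).ne'
  field_simp
  ring

end aux

/-- The function `f(x) = e^{−x²/2} / ∫_x^∞ e^{−t²/2} dt` is convex on `ℝ`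
(Proposition 5 (i), convexity part). -/
theorem inverse_mills_ratio_convex :
    ConvexOn ℝ Set.univ (fun x : ℝ =>
      Real.exp (-x ^ 2 / 2) / ∫ t in Set.Ici x, Real.exp (-t ^ 2 / 2)) := by
  show ConvexOn ℝ Set.univ (fun x : ℝ => gau x / gInt x)
  have hderiv1 : deriv (fun x : ℝ => gau x / gInt x) = millsD :=
    funext fun x => (mills_hasDeriv x).deriv
  refine convexOn_of_deriv2_nonneg convex_univ ?_ ?_ ?_ ?_
  · exact (Continuous.continuousOn (by
      refine continuous_iff_continuousAt.mpr fun x => (mills_hasDeriv x).continuousAt))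
  · intro x _
    exact (mills_hasDeriv x).differentiableAt.differentiableWithinAt
  · intro x _
    rw [hderiv1]
    exact (millsD_hasDeriv x).differentiableAt.differentiableWithinAt
  · intro x _
    have h2 : deriv^[2] (fun x : ℝ => gau x / gInt x) x
        = deriv (deriv (fun x : ℝ => gau x / gInt x)) x := rfl
    rw [h2, hderiv1, (millsD_hasDeriv x).deriv]
    unfold millsD2
    apply div_nonneg
    · exact mul_nonneg (gau_pos x).le (key_ineq x)
    · exact pow_nonneg (gInt_pos x).le 3
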